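/- arXiv:2001.07697 — 3 statements merged into one kernel-verified Lean document; each statement's English description precedes it below -/
import Mathlib

section
/- Let Δ_n = {p ∈ ℝ^n : p_i ≥ 0, ∑_i p_i = 1} and let f : Δ_n × Ξ → ℝ be such that for every ξ ∈ Ξ the function f(·,ξ) is convex and continuously differentiable on Δ_n with ‖∇_x f(x,ξ)‖_∞ ≤ M_∞. Let δ ≥ 0 and g : Δ_n × Ξ → ℝ^n satisfy ‖∇_x f(x,ξ) − g(x,ξ)‖₂ ≤ δ and ‖g(x,ξ)‖_∞ ≤ √2·M_∞ for all x, ξ. Let F(x) = E[f(x,ξ)] for a Ξ-valued random variable ξ, assume F is differentiable with ∇F(x) = E[∇_x f(x,ξ)], and let x* ∈ argmin_{x∈Δ_n} F(x). Fix any ξ¹,…,ξ^N ∈ Ξ, a stepsize η > 0, x¹ = (1/n,…,1/n), and define the multiplicative-update iterates x^{k+1}_i = x^k_i exp(−η g_i(x^k,ξ^k)) / ∑_{j=1}^n x^k_j exp(−η g_j(x^k,ξ^k)). Then the average x̆^N = (1/N)∑_{k=1}^N x^k satisfies F(x̆^N) − F(x*) ≤ 2δ + (1/N)∑_{k=1}^N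 ⟨∇F(x^k) − ∇_x f(x^k,ξ^k), x^k − x*⟩ + KL(x*,x¹)/(ηN) + η M_∞². -/
open MeasureTheory ProbabilityTheory Real
open scoped RealInnerProductSpace BigOperators ENNReal

noncomputable section
theorem log_sum_exp_le {ι : Type*} [Fintype ι] (p t : ι → ℝ)
    (hp : ∀ i, 0 < p i) (hp1 : ∑ i, p i = 1) (K : ℝ)
    (hK : ∀ i, t i ^ 2 ≤ K) :
    Real.log (∑ i, p i * Real.exp (t i)) ≤ (∑ i, p i * t i) + K / 2 := by
  have hne : Nonempty ι := by
    by_contra h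
    rw [not_nonempty_iff] at h
    simp [Finset.univ_eq_empty] at hp1
  set A : ℝ → ℝ := fun h => ∑ i, p i * Real.exp (h * t i) with hA
  set A1 : ℝ → ℝ := fun h => ∑ i, p i * t i * Real.exp (h * t i) with hA1
  set A2 : ℝ → ℝ := fun h => ∑ i, p i * t i ^ 2 * Real.exp (h * t i) with hA2
  have hApos : ∀ h, 0 < A h := fun h =>
    Finset.sum_pos (fun i _ => mul_pos (hp i) (Real.exp_pos _)) Finset.univ_nonempty
  have hAd : ∀ h, HasDerivAt A (A1 h) h := by
    intro h
    apply HasDerivAt.fun_sum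
    intro i _
    have : HasDerivAt (fun h : ℝ => Real.exp (h * t i)) (t i * Real.exp (h * t i)) h := by
      simpa [mul_comm, Function.comp_def] using (Real.hasDerivAt_exp (h * t i)).comp h ((hasDerivAt_id h).mul_const (t i))
    simpa [mul_assoc, mul_comm, mul_left_comm] using this.const_mul (p i)
  have hA1d : ∀ h, HasDerivAt A1 (A2 h) h := by
    intro h
    apply HasDerivAt.fun_sum
    intro i _
    have : HasDerivAt (fun h : ℝ => Real.exp (h * t i)) (t i * Real.exp (h * t i)) h := by
      simpa [mul_comm, Function.comp_def] using (Real.hasDerivAt_exp (h * t i)).comp h ((hasDerivAt_id h).mul_const (t i))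
    have := this.const_mul (p i * t i)
    simpa [pow_two, mul_assoc, mul_comm, mul_left_comm] using this
  have hA0 : A 0 = 1 := by simp [hA, hp1]
  have hA10 : A1 0 = ∑ i, p i * t i := by simp [hA1]
  set μ : ℝ := ∑ i, p i * t i with hμ
  set v : ℝ → ℝ := fun h => A1 h / A h - μ - K * h with hv
  have hA2le : ∀ h, A2 h ≤ K * A h := by
    intro h
    rw [hA2, hA, Finset.mul_sum]
    apply Finset.sum_le_sum
    intro i _
    have h1 : p i * t i ^ 2 ≤ p i * K := mul_le_mul_of_nonneg_left (hK i) (hp i).le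
    calc p i * t i ^ 2 * Real.exp (h * t i) ≤ p i * K * Real.exp (h * t i) :=
          mul_le_mul_of_nonneg_right h1 (Real.exp_pos _).le
      _ = K * (p i * Real.exp (h * t i)) := by ring
  have hvd : ∀ h, HasDerivAt v ((A2 h * A h - A1 h * A1 h) / (A h) ^ 2 - K) h := by
    intro h
    have := ((hA1d h).div (hAd h) (hApos h).ne')
    exact ((this.sub_const μ).sub ((hasDerivAt_id h).const_mul K)).congr_deriv (by ring)
  have hvderiv_nonpos : ∀ h, (A2 h * A h - A1 h * A1 h) / (A h) ^ 2 - K ≤ 0 := by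
    intro h
    have h1 : A2 h * A h - A1 h * A1 h ≤ K * (A h) ^ 2 := by
      have := mul_le_mul_of_nonneg_right (hA2le h) (hApos h).le
      nlinarith [sq_nonneg (A1 h), sq_nonneg (A h)]
    have h2 : (0:ℝ) < (A h) ^ 2 := pow_pos (hApos h) 2
    rw [sub_nonpos, div_le_iff₀ h2]
    linarith [h1]
  have hvanti : Antitone v := by
    apply antitone_of_deriv_nonpos
    · exact fun h => (hvd h).differentiableAt
    · intro h
      rw [(hvd h).deriv]
      exact hvderiv_nonpos h
  have hv0 : v 0 = 0 := by simp [hv, hA0, hA10, hμ]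
  have hvle : ∀ h, 0 ≤ h → v h ≤ 0 := fun h hh => hv0 ▸ hvanti hh
  set w : ℝ → ℝ := fun h => Real.log (A h) - μ * h - K * h ^ 2 / 2 with hw
  have hwd : ∀ h, HasDerivAt w (v h) h := by
    intro h
    have hlog : HasDerivAt (fun h => Real.log (A h)) (A1 h / A h) h :=
      (hAd h).log (hApos h).ne'
    have hsq : HasDerivAt (fun h : ℝ => K * h ^ 2 / 2) (K * h) h := by
      have := ((hasDerivAt_pow 2 h).const_mul K).div_const 2
      exact this.congr_deriv (by ring)
    have hlin : HasDerivAt (fun h : ℝ => μ * h) μ h := by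
      simpa using (hasDerivAt_id h).const_mul μ
    exact ((hlog.sub hlin).sub hsq).congr_deriv (by simp [hv])
  have hwanti : AntitoneOn w (Set.Ici 0) := by
    apply antitoneOn_of_deriv_nonpos (convex_Ici 0)
    · exact fun h _ => (hwd h).differentiableAt.continuousAt.continuousWithinAt
    · exact fun h _ => (hwd h).differentiableAt.differentiableWithinAt
    · intro h hh
      rw [(hwd h).deriv]
      exact hvle h (le_of_lt (by simpa using hh))
  have hw10 : w 1 ≤ w 0 := hwanti (Set.self_mem_Ici) (by norm_num) zero_le_one
  have hw0 : w 0 = 0 := by simp [hw, hA0]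
  have hw1 : w 1 = Real.log (∑ i, p i * Real.exp (t i)) - μ - K / 2 := by
    simp [hw, hA]
  rw [hw0] at hw10
  rw [hw1] at hw10
  linarith

theorem kl_nonneg' {ι : Type*} [Fintype ι] (a b : ι → ℝ)
    (ha : ∀ i, 0 ≤ a i) (hb : ∀ i, 0 < b i)
    (ha1 : ∑ i, a i = 1) (hb1 : ∑ i, b i = 1) :
    0 ≤ ∑ i, a i * Real.log (a i / b i) := by
  have key : ∀ i, a i - b i ≤ a i * Real.log (a i / b i) := by
    intro i
    rcases eq_or_lt_of_le (ha i) with h | h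
    · simp [← h]
      linarith [(hb i).le]
    · have hd : 0 < a i / b i := div_pos h (hb i)
      have := Real.log_le_sub_one_of_pos (show (0:ℝ) < b i / a i from div_pos (hb i) h)
      have hinv : Real.log (b i / a i) = - Real.log (a i / b i) := by
        rw [← Real.log_inv]
        congr 1
        field_simp
      rw [hinv] at this
      have h2 : 1 - b i / a i ≤ Real.log (a i / b i) := by linarith
      have := mul_le_mul_of_nonneg_left h2 h.le
      calc a i - b i = a i * (1 - b i / a i) := by field_simp
        _ ≤ a i * Real.log (a i / b i) := this
  calc (0:ℝ) = ∑ i, (a i - b i) := by rw [Finset.sum_sub_distrib, ha1, hb1]; ring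
    _ ≤ _ := Finset.sum_le_sum fun i _ => key i

theorem telescope_Icc (u : ℕ → ℝ) (N : ℕ) :
    ∑ k ∈ Finset.Icc 1 N, (u k - u (k + 1)) = u 1 - u (N + 1) := by
  induction N with
  | zero => simp
  | succ m ih =>
      rw [Finset.sum_Icc_succ_top (by omega : 1 ≤ m + 1), ih]
      ring
set_option maxHeartbeats 2000000 in
/-- Deterministic bound for stochastic mirror descent (entropic
multiplicative updates) on the probability simplex with an inexact gradient oracle:
the averaged iterate satisfies
`F(x̆^N) − F(x*) ≤ 2δ + (1/N)∑ₖ⟪∇F(xᵏ) − ∇f(xᵏ,ξᵏ), xᵏ − x*⟫ + KL(x*,x¹)/(ηN) + ηM_∞²`. -/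
theorem mirror_descent_regret_bound
    (n : ℕ) (hn : 1 ≤ n) (N : ℕ) (hN : 1 ≤ N)
    (Ξ : Type*) [MeasurableSpace Ξ]
    -- the probability simplex `Δ_n`:
    (Δ : Set (EuclideanSpace ℝ (Fin n)))
    (hΔ : Δ = {p : EuclideanSpace ℝ (Fin n) | (∀ i, 0 ≤ p i) ∧ ∑ i, p i = 1})
    (Minf : ℝ)
    (f : EuclideanSpace ℝ (Fin n) → Ξ → ℝ)
    (f' : EuclideanSpace ℝ (Fin n) → Ξ → EuclideanSpace ℝ (Fin n))
    -- `f(·,ξ)` is continuously differentiable with gradient `f'(·,ξ)` and convex on `Δ`: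
    (hgrad : ∀ ξ : Ξ, ∀ x ∈ Δ, HasGradientAt (fun y => f y ξ) (f' x ξ) x)
    (hgradCont : ∀ ξ : Ξ, ContinuousOn (fun x => f' x ξ) Δ)
    (hconv : ∀ ξ : Ξ, ∀ x ∈ Δ, ∀ y ∈ Δ, f x ξ ≥ f y ξ + ⟪f' y ξ, x - y⟫)
    -- `‖∇_x f(x,ξ)‖_∞ ≤ M_∞`:
    (hgradbdd : ∀ ξ : Ξ, ∀ x ∈ Δ, ∀ i, |f' x ξ i| ≤ Minf)
    -- inexact oracle:
    (δ : ℝ) (hδ : 0 ≤ δ)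
    (g : EuclideanSpace ℝ (Fin n) → Ξ → EuclideanSpace ℝ (Fin n))
    (hg2 : ∀ x ∈ Δ, ∀ ξ : Ξ, ‖f' x ξ - g x ξ‖ ≤ δ)
    (hginf : ∀ x ∈ Δ, ∀ ξ : Ξ, ∀ i, |g x ξ i| ≤ Real.sqrt 2 * Minf)
    -- expected risk `F(x) = E[f(x,ξ)]`, differentiable with `∇F(x) = E[∇_x f(x,ξ)]`:
    (Ω : Type*) [MeasurableSpace Ω] (P : Measure Ω) [IsProbabilityMeasure P]
    (ζ : Ω → Ξ) (hζ : Measurable ζ)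
    (F : EuclideanSpace ℝ (Fin n) → ℝ)
    (hF : ∀ y, F y = ∫ ω, f y (ζ ω) ∂P)
    (hFint : ∀ y ∈ Δ, Integrable (fun ω => f y (ζ ω)) P)
    (F' : EuclideanSpace ℝ (Fin n) → EuclideanSpace ℝ (Fin n))
    (hF'grad : ∀ x ∈ Δ, HasGradientAt F (F' x) x)
    (hF' : ∀ y ∈ Δ, F' y = ∫ ω, f' y (ζ ω) ∂P)
    (hF'int : ∀ y ∈ Δ, Integrable (fun ω => f' y (ζ ω)) P)
    (xstar : EuclideanSpace ℝ (Fin n)) (hxstar : xstar ∈ Δ)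
    (hxstarmin : ∀ y ∈ Δ, F xstar ≤ F y)
    -- data, stepsize, and multiplicative-update iterates:
    (ξs : ℕ → Ξ) (η : ℝ) (hη : 0 < η)
    (x : ℕ → EuclideanSpace ℝ (Fin n))
    (hxinit : ∀ i, x 1 i = 1 / (n : ℝ))
    (hiter : ∀ k, 1 ≤ k → k ≤ N → ∀ i,
      x (k + 1) i = x k i * Real.exp (-η * g (x k) (ξs k) i) /
        ∑ j, x k j * Real.exp (-η * g (x k) (ξs k) j)) :
    F ((1 / (N : ℝ)) • ∑ k ∈ Finset.Icc 1 N, x k) - F xstar ≤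
      2 * δ +
        (1 / (N : ℝ)) * ∑ k ∈ Finset.Icc 1 N,
          ⟪F' (x k) - f' (x k) (ξs k), x k - xstar⟫ +
        (∑ i, xstar i * Real.log (xstar i / x 1 i)) / (η * N) + η * Minf ^ 2 := by
  have hne : Nonempty (Fin n) := ⟨⟨0, hn⟩⟩
  have hnR : (0:ℝ) < n := by exact_mod_cast hn
  have hNR : (0:ℝ) < N := by exact_mod_cast hN
  -- iterate facts
  have hx : ∀ k, 1 ≤ k → k ≤ N + 1 → (∀ i, 0 < x k i) ∧ ∑ i, x k i = 1 := by
    intro k hk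
    induction k, hk using Nat.le_induction with
    | base =>
        intro _
        constructor
        · intro i; rw [hxinit i]; positivity
        · simp only [hxinit]
          rw [Finset.sum_const, Finset.card_univ, Fintype.card_fin, nsmul_eq_mul]
          field_simp
    | succ k hk ih =>
        intro hk2
        have hkN : k ≤ N := by omega
        obtain ⟨hpos, hsum⟩ := ih (by omega)
        have hZ : 0 < ∑ j, x k j * Real.exp (-η * g (x k) (ξs k) j) :=
          Finset.sum_pos (fun j _ => mul_pos (hpos j) (Real.exp_pos _)) Finset.univ_nonempty
        constructor
        · intro i
          rw [hiter k hk hkN i]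
          exact div_pos (mul_pos (hpos i) (Real.exp_pos _)) hZ
        · simp only [hiter k hk hkN]
          rw [← Finset.sum_div, div_self hZ.ne']
  have hmem : ∀ k, 1 ≤ k → k ≤ N + 1 → x k ∈ Δ := by
    intro k h1 h2
    rw [hΔ]
    exact ⟨fun i => (hx k h1 h2).1 i |>.le, (hx k h1 h2).2⟩
  have hxsΔ : (∀ i, 0 ≤ xstar i) ∧ ∑ i, xstar i = 1 := by rwa [hΔ] at hxstar
  -- inner product in coordinates
  have hinner : ∀ a b : EuclideanSpace ℝ (Fin n), ⟪a, b⟫ = ∑ i, a i * b i := by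
    intro a b
    simp [PiLp.inner_apply, RCLike.inner_apply, conj_trivial]
    exact Finset.sum_congr rfl fun i _ => mul_comm _ _
  -- norm bound on the simplex
  have hnorm1 : ∀ p ∈ Δ, ‖p‖ ≤ 1 := by
    intro p hp
    rw [hΔ] at hp
    rw [EuclideanSpace.norm_eq]
    rw [show (1:ℝ) = Real.sqrt 1 by simp]
    apply Real.sqrt_le_sqrt
    have h1 : ∀ i, ‖p i‖ ^ 2 ≤ p i := by
      intro i
      rw [Real.norm_eq_abs, sq_abs]
      have hle1 : p i ≤ 1 := by
        rw [← hp.2]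
        exact Finset.single_le_sum (fun j _ => hp.1 j) (Finset.mem_univ i)
      nlinarith [hp.1 i]
    calc ∑ i, ‖p i‖ ^ 2 ≤ ∑ i, p i := Finset.sum_le_sum fun i _ => h1 i
      _ = 1 := hp.2
  have hnormsub : ∀ k, 1 ≤ k → k ≤ N + 1 → ‖x k - xstar‖ ≤ 2 := by
    intro k h1 h2
    calc ‖x k - xstar‖ ≤ ‖x k‖ + ‖xstar‖ := norm_sub_le _ _
      _ ≤ 1 + 1 := add_le_add (hnorm1 _ (hmem k h1 h2)) (hnorm1 _ hxstar)
      _ = 2 := by norm_num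
  -- convexity of F via integration
  have hFconv : ∀ a ∈ Δ, ∀ b ∈ Δ, F b + ⟪F' b, a - b⟫ ≤ F a := by
    intro a ha b hb
    have hint1 : Integrable (fun ω => ⟪f' b (ζ ω), a - b⟫) P :=
      (hF'int b hb).inner_const (a - b)
    have hinteq : ∫ ω, ⟪f' b (ζ ω), a - b⟫ ∂P = ⟪F' b, a - b⟫ := by
      calc ∫ ω, ⟪f' b (ζ ω), a - b⟫ ∂P = ∫ ω, ⟪a - b, f' b (ζ ω)⟫ ∂P := by
            simp_rw [real_inner_comm]
        _ = ⟪a - b, ∫ ω, f' b (ζ ω) ∂P⟫ := integral_inner (hF'int b hb) (a - b)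
        _ = ⟪F' b, a - b⟫ := by rw [← hF' b hb, real_inner_comm]
    have hmono : ∫ ω, (f b (ζ ω) + ⟪f' b (ζ ω), a - b⟫) ∂P ≤ ∫ ω, f a (ζ ω) ∂P := by
      apply integral_mono ((hFint b hb).add hint1) (hFint a ha)
      intro ω
      exact hconv (ζ ω) a ha b hb
    rw [integral_add (hFint b hb) hint1, hinteq] at hmono
    rw [hF a, hF b]
    exact hmono
  -- KL divergence to the iterates
  set D : ℕ → ℝ := fun m => ∑ i, xstar i * Real.log (xstar i / x m i) with hD
  have hDN1 : 0 ≤ D (N + 1) :=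
    kl_nonneg' xstar (fun i => x (N + 1) i) hxsΔ.1 (hx (N+1) (by omega) le_rfl).1
      hxsΔ.2 (hx (N+1) (by omega) le_rfl).2
  -- per-step bound
  have hstep : ∀ k, 1 ≤ k → k ≤ N →
      ⟪g (x k) (ξs k), x k - xstar⟫ ≤ (D k - D (k + 1)) / η + η * Minf ^ 2 := by
    intro k hk1 hk2
    obtain ⟨hpos, hsum⟩ := hx k hk1 (by omega)
    set G : Fin n → ℝ := fun i => g (x k) (ξs k) i with hG
    set Z : ℝ := ∑ j, x k j * Real.exp (-η * G j) with hZdef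
    have hZ : 0 < Z :=
      Finset.sum_pos (fun j _ => mul_pos (hpos j) (Real.exp_pos _)) Finset.univ_nonempty
    -- Hoeffding bound
    have hhoef : Real.log Z ≤ (∑ i, x k i * (-η * G i)) + (2 * η ^ 2 * Minf ^ 2) / 2 := by
      apply log_sum_exp_le (fun i => x k i) (fun i => -η * G i) hpos hsum
      intro i
      have h1 : |G i| ≤ Real.sqrt 2 * Minf := hginf (x k) (hmem k hk1 (by omega)) (ξs k) i
      have h2 : G i ^ 2 ≤ (Real.sqrt 2 * Minf) ^ 2 := by
        rw [← sq_abs]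
        exact pow_le_pow_left₀ (abs_nonneg _) h1 2
      have h3 : (Real.sqrt 2 * Minf) ^ 2 = 2 * Minf ^ 2 := by
        rw [mul_pow, Real.sq_sqrt (by norm_num : (0:ℝ) ≤ 2)]
      nlinarith [sq_nonneg η]
    -- change of KL under the multiplicative update
    have hterm : ∀ i, xstar i * Real.log (xstar i / x (k+1) i) =
        xstar i * Real.log (xstar i / x k i) + xstar i * (η * G i) + xstar i * Real.log Z := by
      intro i
      rcases eq_or_lt_of_le (hxsΔ.1 i) with h | h
      · rw [← h]; ring
      · have hxk1 : x (k+1) i = x k i * Real.exp (-η * G i) / Z := hiter k hk1 hk2 i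
        have hnum : 0 < x k i * Real.exp (-η * G i) := mul_pos (hpos i) (Real.exp_pos _)
        rw [hxk1]
        rw [Real.log_div h.ne' (div_pos hnum hZ).ne', Real.log_div hnum.ne' hZ.ne',
          Real.log_mul (hpos i).ne' (Real.exp_pos _).ne', Real.log_exp,
          Real.log_div h.ne' (hpos i).ne']
        ring
    have hDstep : D (k+1) = D k + η * (∑ i, xstar i * G i) + Real.log Z := by
      have : D (k+1) = ∑ i, (xstar i * Real.log (xstar i / x k i) + xstar i * (η * G i)
          + xstar i * Real.log Z) := Finset.sum_congr rfl fun i _ => hterm i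
      rw [this, Finset.sum_add_distrib, Finset.sum_add_distrib, ← Finset.sum_mul, hxsΔ.2]
      have h4 : ∑ i, xstar i * (η * G i) = η * ∑ i, xstar i * G i := by
        rw [Finset.mul_sum]; exact Finset.sum_congr rfl fun i _ => by ring
      rw [h4, one_mul]
    have hsum1 : (∑ i, x k i * (-η * G i)) = -η * ∑ i, x k i * G i := by
      rw [Finset.mul_sum]; apply Finset.sum_congr rfl; intro i _; ring
    have hkey : η * (∑ i, G i * (x k i - xstar i)) ≤ D k - D (k+1) + η ^ 2 * Minf ^ 2 := by
      rw [hsum1] at hhoef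
      have hexp : ∑ i, G i * (x k i - xstar i) = (∑ i, x k i * G i) - ∑ i, xstar i * G i := by
        rw [← Finset.sum_sub_distrib]; apply Finset.sum_congr rfl; intro i _; ring
      rw [hexp]
      nlinarith [hhoef, hDstep]
    have hip : ⟪g (x k) (ξs k), x k - xstar⟫ = ∑ i, G i * (x k i - xstar i) := by
      rw [hinner]
      apply Finset.sum_congr rfl
      intro i _
      rw [PiLp.sub_apply]
    rw [hip]
    have h2 : (D k - D (k + 1)) / η + η * Minf ^ 2 = (D k - D (k + 1) + η ^ 2 * Minf ^ 2) / η := by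
      field_simp
    rw [h2, le_div_iff₀ hη]
    nlinarith [hkey]
  -- combined per-iteration bound
  have hkbound : ∀ k ∈ Finset.Icc 1 N, F (x k) - F xstar ≤
      ⟪F' (x k) - f' (x k) (ξs k), x k - xstar⟫ + 2 * δ
        + ((D k - D (k + 1)) / η + η * Minf ^ 2) := by
    intro k hk
    rw [Finset.mem_Icc] at hk
    have hkΔ : x k ∈ Δ := hmem k hk.1 (by omega)
    have h1 : F (x k) - F xstar ≤ ⟪F' (x k), x k - xstar⟫ := by
      have := hFconv xstar hxstar (x k) hkΔ
      have hneg : ⟪F' (x k), xstar - x k⟫ = -⟪F' (x k), x k - xstar⟫ := by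
        rw [← inner_neg_right, neg_sub]
      rw [hneg] at this
      linarith
    have hdecomp : ⟪F' (x k), x k - xstar⟫ =
        ⟪F' (x k) - f' (x k) (ξs k), x k - xstar⟫
        + ⟪f' (x k) (ξs k) - g (x k) (ξs k), x k - xstar⟫
        + ⟪g (x k) (ξs k), x k - xstar⟫ := by
      rw [inner_sub_left, inner_sub_left]
      ring
    have hmid : ⟪f' (x k) (ξs k) - g (x k) (ξs k), x k - xstar⟫ ≤ 2 * δ := by
      calc ⟪f' (x k) (ξs k) - g (x k) (ξs k), x k - xstar⟫
          ≤ ‖f' (x k) (ξs k) - g (x k) (ξs k)‖ * ‖x k - xstar‖ := real_inner_le_norm _ _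
        _ ≤ δ * 2 := mul_le_mul (hg2 (x k) hkΔ (ξs k)) (hnormsub k hk.1 (by omega))
            (norm_nonneg _) hδ
        _ = 2 * δ := by ring
    have h3 := hstep k hk.1 hk.2
    linarith [h1, hdecomp ▸ h1]
  -- sum the per-iteration bounds
  have hcard : (Finset.Icc 1 N).card = N := by rw [Nat.card_Icc]; omega
  have htel : ∑ k ∈ Finset.Icc 1 N, (D k - D (k + 1)) = D 1 - D (N + 1) := telescope_Icc D N
  have hsumbound : ∑ k ∈ Finset.Icc 1 N, (F (x k) - F xstar) ≤
      (∑ k ∈ Finset.Icc 1 N, ⟪F' (x k) - f' (x k) (ξs k), x k - xstar⟫)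
        + (N : ℝ) * (2 * δ) + (D 1 - D (N + 1)) / η + (N : ℝ) * (η * Minf ^ 2) := by
    calc ∑ k ∈ Finset.Icc 1 N, (F (x k) - F xstar)
        ≤ ∑ k ∈ Finset.Icc 1 N, (⟪F' (x k) - f' (x k) (ξs k), x k - xstar⟫ + 2 * δ
            + ((D k - D (k + 1)) / η + η * Minf ^ 2)) := Finset.sum_le_sum hkbound
      _ = _ := by
          rw [Finset.sum_add_distrib, Finset.sum_add_distrib, Finset.sum_add_distrib,
            Finset.sum_const, Finset.sum_const, hcard, ← Finset.sum_div, htel]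
          push_cast
          ring
  -- Jensen step: the average lies in Δ and F(average) ≤ average of F
  set xb : EuclideanSpace ℝ (Fin n) := (1 / (N : ℝ)) • ∑ k ∈ Finset.Icc 1 N, x k with hxb
  have happly : ∀ i, xb i = (1 / (N : ℝ)) * ∑ k ∈ Finset.Icc 1 N, x k i := by
    intro i
    rw [hxb, PiLp.smul_apply, smul_eq_mul]
    congr 1
    rw [WithLp.ofLp_sum]
    exact Finset.sum_apply i _ _
  have hxbΔ : xb ∈ Δ := by
    rw [hΔ]
    constructor
    · intro i
      rw [happly i]
      have : 0 ≤ ∑ k ∈ Finset.Icc 1 N, x k i :=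
        Finset.sum_nonneg fun k hk => by
          rw [Finset.mem_Icc] at hk
          exact ((hx k hk.1 (by omega)).1 i).le
      positivity
    · have : ∑ i, xb i = (1 / (N : ℝ)) * ∑ k ∈ Finset.Icc 1 N, (∑ i, x k i) := by
        simp_rw [happly, ← Finset.mul_sum]
        rw [Finset.sum_comm]
      rw [this]
      have h1 : ∀ k ∈ Finset.Icc 1 N, ∑ i, x k i = 1 := by
        intro k hk
        rw [Finset.mem_Icc] at hk
        exact (hx k hk.1 (by omega)).2
      rw [Finset.sum_congr rfl h1, Finset.sum_const, hcard]
      field_simp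
      simp
  have hNsmul : (N : ℝ) • xb = ∑ k ∈ Finset.Icc 1 N, x k := by
    rw [hxb, smul_smul]
    rw [mul_one_div, div_self hNR.ne', one_smul]
  have hjensen : (N : ℝ) * F xb ≤ ∑ k ∈ Finset.Icc 1 N, F (x k) := by
    have h1 : ∀ k ∈ Finset.Icc 1 N, F xb + ⟪F' xb, x k - xb⟫ ≤ F (x k) := by
      intro k hk
      rw [Finset.mem_Icc] at hk
      exact hFconv (x k) (hmem k hk.1 (by omega)) xb hxbΔ
    have h2 : ∑ k ∈ Finset.Icc 1 N, (F xb + ⟪F' xb, x k - xb⟫) ≤ ∑ k ∈ Finset.Icc 1 N, F (x k) :=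
      Finset.sum_le_sum h1
    have h3 : ∑ k ∈ Finset.Icc 1 N, ⟪F' xb, x k - xb⟫ = (0:ℝ) := by
      rw [← inner_sum]
      have : ∑ k ∈ Finset.Icc 1 N, (x k - xb) = 0 := by
        rw [Finset.sum_sub_distrib, Finset.sum_const, hcard, ← Nat.cast_smul_eq_nsmul ℝ, hNsmul,
          sub_self]
      rw [this, inner_zero_right]
    rw [Finset.sum_add_distrib, h3, Finset.sum_const, hcard, add_zero, nsmul_eq_mul] at h2
    exact h2
  -- final assembly
  have hfin : F xb - F xstar ≤ (1 / (N : ℝ)) * ∑ k ∈ Finset.Icc 1 N, (F (x k) - F xstar) := by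
    rw [Finset.sum_sub_distrib, Finset.sum_const, hcard, nsmul_eq_mul]
    rw [mul_sub, ← mul_assoc]
    rw [one_div_mul_cancel hNR.ne', one_mul]
    have h4 : F xb ≤ (1 / (N : ℝ)) * ∑ k ∈ Finset.Icc 1 N, F (x k) := by
      rw [one_div, inv_mul_eq_div, le_div_iff₀ hNR]
      nlinarith [hjensen]
    linarith
  set T : ℝ := ∑ k ∈ Finset.Icc 1 N, ⟪F' (x k) - f' (x k) (ξs k), x k - xstar⟫ with hT
  have hmain : F xb - F xstar ≤
      2 * δ + (1 / (N : ℝ)) * T + (D 1 - D (N + 1)) / (η * N) + η * Minf ^ 2 := by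
    have hpos1 : (0:ℝ) < 1 / (N : ℝ) := by positivity
    have h5 := mul_le_mul_of_nonneg_left hsumbound hpos1.le
    have h6 : ∀ t a : ℝ, (1 / (N : ℝ)) * (t + (N : ℝ) * (2 * δ) + a / η
        + (N : ℝ) * (η * Minf ^ 2)) =
        2 * δ + (1 / (N : ℝ)) * t + a / (η * N) + η * Minf ^ 2 := by
      intro t a
      field_simp
      ring
    rw [h6 T (D 1 - D (N + 1))] at h5
    linarith [hfin]
  have h7 : (D 1 - D (N + 1)) / (η * (N : ℝ)) ≤ D 1 / (η * (N : ℝ)) := by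
    apply div_le_div_of_nonneg_right ?_ (by positivity)
    linarith
  have hgoal : F xb - F xstar ≤ 2 * δ + (1 / (N : ℝ)) * T + D 1 / (η * N) + η * Minf ^ 2 := by
    linarith
  exact hgoal
end
end

section
/- Let n ≥ 1, let C ∈ ℝ^{n×n} have nonnegative entries, and let γ > 0. Then for all p, q ∈ Δ_n: W(p,q) − 2γ log n ≤ W_γ(p,q) ≤ W(p,q). -/
open MeasureTheory ProbabilityTheory Real
open scoped RealInnerProductSpace BigOperators ENNReal

noncomputable section

/-- The probability simplex `Δ_n ⊆ ℝⁿ`. -/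
def simplex (n : ℕ) : Set (EuclideanSpace ℝ (Fin n)) :=
  {p | (∀ i, 0 ≤ p i) ∧ ∑ i, p i = 1}

/-- The transport polytope `U(p,q)`. -/
def transportPolytope (n : ℕ) (p q : EuclideanSpace ℝ (Fin n)) :
    Set (Fin n → Fin n → ℝ) :=
  {T | (∀ i j, 0 ≤ T i j) ∧ (∀ i, ∑ j, T i j = p i) ∧ (∀ j, ∑ i, T i j = q j)}

/-- The (unregularized) optimal transport cost `W(p,q)`. -/
def OT (n : ℕ) (C : Fin n → Fin n → ℝ) (p q : EuclideanSpace ℝ (Fin n)) : ℝ :=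
  sInf ((fun T => ∑ i, ∑ j, C i j * T i j) '' transportPolytope n p q)

/-- The entropy-regularized optimal transport cost `W_γ(p,q)`, with
`E(T) = −∑_{i,j} T_{ij} log T_{ij}` (and `0·log 0 = 0`). -/
def entOT (n : ℕ) (C : Fin n → Fin n → ℝ) (γ : ℝ)
    (p q : EuclideanSpace ℝ (Fin n)) : ℝ :=
  sInf ((fun T => ∑ i, ∑ j, (C i j * T i j + γ * (T i j * Real.log (T i j)))) ''
    transportPolytope n p q)

lemma aux_mul_log (N x : ℝ) (hN : 0 < N) (hx : 0 ≤ x) :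
    x - 1 / N - x * Real.log N ≤ x * Real.log x := by
  rcases hx.eq_or_lt with h | h
  · rw [← h]
    have : 0 < 1 / N := by positivity
    nlinarith
  · have h1 : (0:ℝ) < 1 / (N * x) := by positivity
    have h2 := Real.log_le_sub_one_of_pos h1
    rw [one_div, Real.log_inv, Real.log_mul hN.ne' h.ne'] at h2
    have h3 : x * (N * x)⁻¹ = 1 / N := by field_simp
    nlinarith [mul_le_mul_of_nonneg_left h2 h.le]

/-- For `n ≥ 1`, a nonnegative cost matrix `C` and `γ > 0`,
`W(p,q) − 2γ log n ≤ W_γ(p,q) ≤ W(p,q)` for all `p, q ∈ Δ_n`. -/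
theorem entOT_OT_bounds
    (n : ℕ) (hn : 1 ≤ n)
    (C : Fin n → Fin n → ℝ) (hC : ∀ i j, 0 ≤ C i j)
    (γ : ℝ) (hγ : 0 < γ)
    (p q : EuclideanSpace ℝ (Fin n)) (hp : p ∈ simplex n) (hq : q ∈ simplex n) :
    OT n C p q - 2 * γ * Real.log n ≤ entOT n C γ p q ∧
      entOT n C γ p q ≤ OT n C p q := by
  obtain ⟨hp0, hp1⟩ := hp
  obtain ⟨hq0, hq1⟩ := hq
  have hn0 : (0:ℝ) < n := by exact_mod_cast hn
  have hNN : (0:ℝ) < (n:ℝ) * n := by positivity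
  have hlogNN : Real.log ((n:ℝ) * n) = 2 * Real.log n := by
    rw [Real.log_mul hn0.ne' hn0.ne', two_mul]
  -- nonemptiness
  have hT0 : (fun i j => p i * q j) ∈ transportPolytope n p q := by
    refine ⟨fun i j => mul_nonneg (hp0 i) (hq0 j), fun i => ?_, fun j => ?_⟩
    · rw [← Finset.mul_sum, hq1, mul_one]
    · rw [← Finset.sum_mul, hp1, one_mul]
  have hSne : (transportPolytope n p q).Nonempty := ⟨_, hT0⟩
  -- total mass 1
  have hsum1 : ∀ T ∈ transportPolytope n p q, ∑ i, ∑ j, T i j = 1 := by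
    intro T hT
    simp_rw [hT.2.1]
    exact hp1
  -- entries at most 1
  have hle1 : ∀ T ∈ transportPolytope n p q, ∀ i j, T i j ≤ 1 := by
    intro T hT i j
    have h1 : T i j ≤ ∑ j', T i j' :=
      Finset.single_le_sum (fun j' _ => hT.1 i j') (Finset.mem_univ j)
    have h2 : p i ≤ ∑ i', p i' :=
      Finset.single_le_sum (fun i' _ => hp0 i') (Finset.mem_univ i)
    rw [hT.2.1 i] at h1
    rw [hp1] at h2
    linarith
  -- entropy bound : ∑∑ T log T ≥ -(2 log n)
  have key : ∀ T ∈ transportPolytope n p q,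
      -(2 * Real.log n) ≤ ∑ i, ∑ j, T i j * Real.log (T i j) := by
    intro T hT
    have h1 : ∑ i, ∑ j, (T i j - 1/((n:ℝ)*n) - T i j * Real.log ((n:ℝ)*n))
        ≤ ∑ i, ∑ j, T i j * Real.log (T i j) :=
      Finset.sum_le_sum fun i _ => Finset.sum_le_sum fun j _ =>
        aux_mul_log _ _ hNN (hT.1 i j)
    have h2 : ∑ i, ∑ j, (T i j - 1/((n:ℝ)*n) - T i j * Real.log ((n:ℝ)*n))
        = -(2 * Real.log n) := by
      simp only [Finset.sum_sub_distrib, Finset.sum_const, Finset.card_univ,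
        Fintype.card_fin, nsmul_eq_mul, ← Finset.sum_mul, hsum1 T hT, hlogNN]
      field_simp
      ring
    linarith
  -- OT bounded below by 0
  have hbOT : BddBelow ((fun T => ∑ i, ∑ j, C i j * T i j) '' transportPolytope n p q) := by
    refine ⟨0, fun x hx => ?_⟩
    obtain ⟨T, hT, rfl⟩ := hx
    exact Finset.sum_nonneg fun i _ => Finset.sum_nonneg fun j _ =>
      mul_nonneg (hC i j) (hT.1 i j)
  have hOT_le : ∀ T ∈ transportPolytope n p q,
      OT n C p q ≤ ∑ i, ∑ j, C i j * T i j := fun T hT =>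
    csInf_le hbOT ⟨T, hT, rfl⟩
  -- key pointwise lower bound for the regularized functional
  have hlow : ∀ T ∈ transportPolytope n p q,
      OT n C p q - 2 * γ * Real.log n
        ≤ ∑ i, ∑ j, (C i j * T i j + γ * (T i j * Real.log (T i j))) := by
    intro T hT
    have h1 := key T hT
    have h2 := hOT_le T hT
    have h3 : ∑ i, ∑ j, (C i j * T i j + γ * (T i j * Real.log (T i j)))
        = (∑ i, ∑ j, C i j * T i j) + γ * ∑ i, ∑ j, T i j * Real.log (T i j) := by
      rw [Finset.mul_sum]
      rw [← Finset.sum_add_distrib]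
      refine Finset.sum_congr rfl fun i _ => ?_
      rw [Finset.mul_sum, ← Finset.sum_add_distrib]
    rw [h3]
    nlinarith [mul_le_mul_of_nonneg_left h1 hγ.le]
  have hbE : BddBelow ((fun T => ∑ i, ∑ j,
      (C i j * T i j + γ * (T i j * Real.log (T i j)))) '' transportPolytope n p q) := by
    refine ⟨OT n C p q - 2 * γ * Real.log n, fun x hx => ?_⟩
    obtain ⟨T, hT, rfl⟩ := hx
    exact hlow T hT
  constructor
  · exact le_csInf (hSne.image _) fun b hb => by
      obtain ⟨T, hT, rfl⟩ := hb; exact hlow T hT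
  · refine le_csInf (hSne.image _) fun b hb => ?_
    obtain ⟨T, hT, rfl⟩ := hb
    have h1 : ∑ i, ∑ j, (C i j * T i j + γ * (T i j * Real.log (T i j)))
        ≤ ∑ i, ∑ j, C i j * T i j := by
      refine Finset.sum_le_sum fun i _ => Finset.sum_le_sum fun j _ => ?_
      have hlog : T i j * Real.log (T i j) ≤ 0 :=
        mul_nonpos_of_nonneg_of_nonpos (hT.1 i j)
          (Real.log_nonpos (hT.1 i j) (hle1 T hT i j))
      nlinarith
    exact le_trans (csInf_le hbE ⟨T, hT, rfl⟩) h1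
end
end

section
/- Let n ≥ 2, let C ∈ ℝ^{n×n} be a symmetric matrix with nonnegative entries, let ℙ be a Borel probability measure on Δ_n, and define the Fréchet functionals W(p) = E_{q∼ℙ}[W(p,q)] and W_γ(p) = E_{q∼ℙ}[W_γ(p,q)] for p ∈ Δ_n. Let ε > 0 and set γ = ε/(4 log n). If p̂ ∈ Δ_n satisfies W_γ(p̂) − min_{p∈Δ_n} W_γ(p) ≤ ε/2, then W(p̂) − min_{p∈Δ_n} W(p) ≤ ε. -/
open MeasureTheory ProbabilityTheory Real
open scoped RealInnerProductSpace BigOperators ENNReal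

noncomputable section

lemma prodCoupling_mem {n : ℕ} {p q : EuclideanSpace ℝ (Fin n)}
    (hp : p ∈ simplex n) (hq : q ∈ simplex n) :
    (fun i j => p i * q j) ∈ transportPolytope n p q := by
  obtain ⟨hp0, hp1⟩ := hp
  obtain ⟨hq0, hq1⟩ := hq
  refine ⟨fun i j => mul_nonneg (hp0 i) (hq0 j), fun i => ?_, fun j => ?_⟩
  · rw [← Finset.mul_sum, hq1, mul_one]
  · rw [← Finset.sum_mul, hp1, one_mul]

lemma coupling_sum_one {n : ℕ} {p q : EuclideanSpace ℝ (Fin n)} {T : Fin n → Fin n → ℝ}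
    (hp : p ∈ simplex n) (hT : T ∈ transportPolytope n p q) :
    ∑ i, ∑ j, T i j = 1 := by
  have h := hT.2.1
  calc ∑ i, ∑ j, T i j = ∑ i, p i := by simp_rw [h]
    _ = 1 := hp.2

lemma coupling_le_one {n : ℕ} {p q : EuclideanSpace ℝ (Fin n)} {T : Fin n → Fin n → ℝ}
    (hp : p ∈ simplex n) (hT : T ∈ transportPolytope n p q) (i j : Fin n) :
    T i j ≤ 1 := by
  have h1 : T i j ≤ ∑ j', T i j' :=
    Finset.single_le_sum (fun j' _ => hT.1 i j') (Finset.mem_univ j)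
  have h2 : p i ≤ ∑ i', p i' :=
    Finset.single_le_sum (fun i' _ => hp.1 i') (Finset.mem_univ i)
  rw [hT.2.1 i] at h1
  rw [hp.2] at h2
  linarith

lemma xlogx_lower {t : ℝ} (N : ℝ) (hN : 0 < N) (h0 : 0 ≤ t) :
    t - 1/N - t * Real.log N ≤ t * Real.log t := by
  rcases eq_or_lt_of_le h0 with h | h
  · rw [← h]
    simp
    positivity
  · have hlog : Real.log (1/(t*N)) ≤ 1/(t*N) - 1 :=
      Real.log_le_sub_one_of_pos (by positivity)
    have heq : Real.log (1/(t*N)) = -(Real.log t + Real.log N) := by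
      rw [one_div, Real.log_inv, Real.log_mul (ne_of_gt h) (ne_of_gt hN)]
    rw [heq] at hlog
    have hmul := mul_le_mul_of_nonneg_left hlog (le_of_lt h)
    have ht : t * (1/(t*N) - 1) = 1/N - t := by
      field_simp
    rw [ht] at hmul
    nlinarith

lemma entropy_sum_bound {n : ℕ} (hn : 1 ≤ n) (T : Fin n → Fin n → ℝ)
    (hnn : ∀ i j, 0 ≤ T i j) (hsum : ∑ i, ∑ j, T i j = 1) :
    -(2 * Real.log n) ≤ ∑ i, ∑ j, T i j * Real.log (T i j) := by
  have hn0 : (0:ℝ) < n := by positivity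
  set N : ℝ := (n:ℝ)^2 with hNdef
  have hN : 0 < N := by positivity
  have key : ∀ i j, T i j - 1/N - T i j * Real.log N ≤ T i j * Real.log (T i j) :=
    fun i j => xlogx_lower N hN (hnn i j)
  have hle : ∑ i, ∑ j, (T i j - 1/N - T i j * Real.log N)
      ≤ ∑ i, ∑ j, T i j * Real.log (T i j) := by
    apply Finset.sum_le_sum
    intro i _
    exact Finset.sum_le_sum fun j _ => key i j
  have hexp : ∑ i, ∑ j, (T i j - 1/N - T i j * Real.log N)
      = (∑ i, ∑ j, T i j) - (n:ℝ)^2 * (1/N) - (∑ i, ∑ j, T i j) * Real.log N := by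
    simp [Finset.sum_sub_distrib, Finset.sum_mul]
    ring
  have hlogN : Real.log N = 2 * Real.log n := by
    rw [hNdef, ← Real.rpow_natCast, Real.log_rpow hn0]
    norm_num
  rw [hexp, hsum, hlogN] at hle
  have : (n:ℝ)^2 * (1/N) = 1 := by
    rw [hNdef]; field_simp
  rw [this] at hle
  linarith

lemma cost_nonneg {n : ℕ} {C : Fin n → Fin n → ℝ} (hC : ∀ i j, 0 ≤ C i j)
    {T : Fin n → Fin n → ℝ} (hTnn : ∀ i j, 0 ≤ T i j) :
    0 ≤ ∑ i, ∑ j, C i j * T i j :=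
  Finset.sum_nonneg fun i _ => Finset.sum_nonneg fun j _ =>
    mul_nonneg (hC i j) (hTnn i j)

lemma OT_bddBelow {n : ℕ} {C : Fin n → Fin n → ℝ} (hC : ∀ i j, 0 ≤ C i j)
    (p q : EuclideanSpace ℝ (Fin n)) :
    BddBelow ((fun T => ∑ i, ∑ j, C i j * T i j) '' transportPolytope n p q) := by
  refine ⟨0, fun x hx => ?_⟩
  obtain ⟨T, hT, rfl⟩ := hx
  exact cost_nonneg hC hT.1

lemma entOT_bddBelow {n : ℕ} (hn : 1 ≤ n) {C : Fin n → Fin n → ℝ} (hC : ∀ i j, 0 ≤ C i j)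
    {γ : ℝ} (hγ : 0 ≤ γ) {p q : EuclideanSpace ℝ (Fin n)} (hp : p ∈ simplex n) :
    BddBelow ((fun T => ∑ i, ∑ j, (C i j * T i j + γ * (T i j * Real.log (T i j)))) ''
      transportPolytope n p q) := by
  refine ⟨-(γ * (2 * Real.log n)), fun x hx => ?_⟩
  obtain ⟨T, hT, rfl⟩ := hx
  have h1 : ∑ i, ∑ j, (C i j * T i j + γ * (T i j * Real.log (T i j)))
      = (∑ i, ∑ j, C i j * T i j) + γ * ∑ i, ∑ j, T i j * Real.log (T i j) := by
    simp [Finset.sum_add_distrib, Finset.mul_sum]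
  dsimp only
  rw [h1]
  have hent := entropy_sum_bound hn T hT.1 (coupling_sum_one hp hT)
  have := cost_nonneg hC hT.1
  nlinarith [mul_le_mul_of_nonneg_left hent hγ]

lemma entOT_le_OT {n : ℕ} (hn : 1 ≤ n) {C : Fin n → Fin n → ℝ} (hC : ∀ i j, 0 ≤ C i j)
    {γ : ℝ} (hγ : 0 ≤ γ) {p q : EuclideanSpace ℝ (Fin n)}
    (hp : p ∈ simplex n) (hq : q ∈ simplex n) :
    entOT n C γ p q ≤ OT n C p q := by
  apply le_csInf ⟨_, Set.mem_image_of_mem _ (prodCoupling_mem hp hq)⟩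
  rintro b ⟨T, hT, rfl⟩
  have h1 : entOT n C γ p q ≤ ∑ i, ∑ j, (C i j * T i j + γ * (T i j * Real.log (T i j))) :=
    csInf_le (entOT_bddBelow hn hC hγ hp) (Set.mem_image_of_mem _ hT)
  have h2 : ∑ i, ∑ j, (C i j * T i j + γ * (T i j * Real.log (T i j)))
      ≤ ∑ i, ∑ j, C i j * T i j := by
    apply Finset.sum_le_sum; intro i _
    apply Finset.sum_le_sum; intro j _
    have hlog : T i j * Real.log (T i j) ≤ 0 :=
      mul_nonpos_of_nonneg_of_nonpos (hT.1 i j)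
        (Real.log_nonpos (hT.1 i j) (coupling_le_one hp hT i j))
    nlinarith
  linarith

lemma OT_le_entOT {n : ℕ} (hn : 1 ≤ n) {C : Fin n → Fin n → ℝ} (hC : ∀ i j, 0 ≤ C i j)
    {γ : ℝ} (hγ : 0 ≤ γ) {p q : EuclideanSpace ℝ (Fin n)}
    (hp : p ∈ simplex n) (hq : q ∈ simplex n) :
    OT n C p q ≤ entOT n C γ p q + γ * (2 * Real.log n) := by
  have key : OT n C p q - γ * (2 * Real.log n) ≤ entOT n C γ p q := by
    apply le_csInf ⟨_, Set.mem_image_of_mem _ (prodCoupling_mem hp hq)⟩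
    rintro b ⟨T, hT, rfl⟩
    have h1 : OT n C p q ≤ ∑ i, ∑ j, C i j * T i j :=
      csInf_le (OT_bddBelow hC p q) (Set.mem_image_of_mem _ hT)
    have h2 : ∑ i, ∑ j, (C i j * T i j + γ * (T i j * Real.log (T i j)))
        = (∑ i, ∑ j, C i j * T i j) + γ * ∑ i, ∑ j, T i j * Real.log (T i j) := by
      simp [Finset.sum_add_distrib, Finset.mul_sum]
    have hent := entropy_sum_bound hn T hT.1 (coupling_sum_one hp hT)
    have h3 := mul_le_mul_of_nonneg_left hent hγ
    dsimp only
    rw [h2]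
    linarith
  linarith

/-- With `γ = ε/(4 log n)`, an `ε/2`-approximate minimizer of the
entropy-regularized Fréchet functional `W_γ(p) = E_{q∼ℙ}[W_γ(p,q)]` is an
`ε`-approximate minimizer of the unregularized Fréchet functional
`W(p) = E_{q∼ℙ}[W(p,q)]`. -/
theorem regularized_barycenter_transfer
    (n : ℕ) (hn : 2 ≤ n)
    (C : Fin n → Fin n → ℝ) (hC : ∀ i j, 0 ≤ C i j) (hCsym : ∀ i j, C i j = C j i)
    -- a Borel probability measure `ℙ` on `Δ_n`:
    (μ : Measure (EuclideanSpace ℝ (Fin n))) [IsProbabilityMeasure μ]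
    (hμ : ∀ᵐ q ∂μ, q ∈ simplex n)
    (ε : ℝ) (hε : 0 < ε)
    (γ : ℝ) (hγ : γ = ε / (4 * Real.log n))
    -- Fréchet functionals:
    (Wbar Wγbar : EuclideanSpace ℝ (Fin n) → ℝ)
    (hWbar : ∀ p, Wbar p = ∫ q, OT n C p q ∂μ)
    (hWγbar : ∀ p, Wγbar p = ∫ q, entOT n C γ p q ∂μ)
    (hWint : ∀ p ∈ simplex n, Integrable (fun q => OT n C p q) μ)
    (hWγint : ∀ p ∈ simplex n, Integrable (fun q => entOT n C γ p q) μ)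
    -- `p̂` is an `ε/2`-approximate minimizer of `W_γ` over `Δ_n`:
    (phat : EuclideanSpace ℝ (Fin n)) (hphat : phat ∈ simplex n)
    (hphatapprox : ∀ p ∈ simplex n, Wγbar phat ≤ Wγbar p + ε / 2) :
    ∀ p ∈ simplex n, Wbar phat ≤ Wbar p + ε := by
  intro p hp
  have h2n : (2:ℝ) ≤ n := by exact_mod_cast hn
  have hlogn : 0 < Real.log n := Real.log_pos (by linarith)
  have hγ0 : 0 ≤ γ := by rw [hγ]; positivity
  have hγ2 : γ * (2 * Real.log n) = ε / 2 := by
    rw [hγ]; field_simp; ring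
  have hn1 : 1 ≤ n := by omega
  have hae1 : (fun q => OT n C phat q) ≤ᵐ[μ] fun q => entOT n C γ phat q + ε/2 := by
    filter_upwards [hμ] with q hq
    have h := OT_le_entOT hn1 hC hγ0 hphat hq
    rw [hγ2] at h; exact h
  have hae2 : (fun q => entOT n C γ p q) ≤ᵐ[μ] fun q => OT n C p q := by
    filter_upwards [hμ] with q hq
    exact entOT_le_OT hn1 hC hγ0 hp hq
  have hint1 := hWint phat hphat
  have hint2 := hWγint phat hphat
  have hint3 := hWγint p hp
  have hint4 := hWint p hp
  have i1 : ∫ q, OT n C phat q ∂μ ≤ ∫ q, (entOT n C γ phat q + ε/2) ∂μ :=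
    integral_mono_ae hint1 (hint2.add (integrable_const _)) hae1
  have i1' : ∫ q, (entOT n C γ phat q + ε/2) ∂μ
      = (∫ q, entOT n C γ phat q ∂μ) + ε/2 := by
    rw [integral_add hint2 (integrable_const _), integral_const]
    simp
  have i2 : ∫ q, entOT n C γ p q ∂μ ≤ ∫ q, OT n C p q ∂μ :=
    integral_mono_ae hint3 hint4 hae2
  have happ := hphatapprox p hp
  rw [hWγbar phat, hWγbar p] at happ
  rw [hWbar phat, hWbar p]
  linarith
end
end
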